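/- The Picard group functor commutes with filtering direct limits of commutative rings: if R is the colimit of a filtered system of commutative rings R_i, then Pic(R) is the colimit of the groups Pic(R_i). -/

import Mathlib

open scoped TensorProduct

/-- A module is invertible (of rank one) if it is finitely generated, projective, and has
a tensor inverse. -/
def IsInvertibleModule (R : Type) [CommRing R] (M : Type) [AddCommGroup M] [Module R M] :
    Prop :=
  Module.Finite R M ∧ Module.Projective R M ∧
    ∃ (N : Type) (_ : AddCommGroup N) (_ : Module R N),
      Nonempty ((M ⊗[R] N) ≃ₗ[R] R)

/-!
A finitely generated projective module is the image of an idempotent matrix `E`, and an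
isomorphism between the images of `E₁` and `E₂` amounts to matrices `U`, `V` with
`V * U = E₁` and `U * V = E₂`. Such data consist of finitely many elements of the colimit
satisfying finitely many polynomial identities, so they descend to some stage of the directed
system. Descending an invertible module `M` and its dual to a common stage `k` gives `N`, `N'`
with `R ⊗ (N ⊗ N') ≅ R ⊗ G k`; descending this isomorphism makes `N` invertible at a later stage.
-/

open Filter Matrix

structure FreeRetract (A : Type*) [CommSemiring A] (ι : Type*) (M : Type*) [AddCommMonoid M]
    [Module A M] where
  π : (ι → A) →ₗ[A] M
  σ : M →ₗ[A] ι → A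
  π_comp_σ : π ∘ₗ σ = LinearMap.id

namespace FreeRetract

variable {A : Type*} [CommSemiring A] {ι ι₁ ι₂ : Type*}
  {M M₁ M₂ : Type*} [AddCommMonoid M] [Module A M] [AddCommMonoid M₁] [Module A M₁]
  [AddCommMonoid M₂] [Module A M₂]

@[simp]
lemma π_σ (r : FreeRetract A ι M) (m : M) : r.π (r.σ m) = m :=
  LinearMap.congr_fun r.π_comp_σ m

lemma finite [Finite ι] (r : FreeRetract A ι M) : Module.Finite A M :=
  .of_surjective r.π fun m => ⟨r.σ m, r.π_σ m⟩

lemma projective [Finite ι] (r : FreeRetract A ι M) : Module.Projective A M :=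
  .of_split r.σ r.π r.π_comp_σ

variable (A M) in
lemma exists_of_finite_projective [Module.Finite A M] [Module.Projective A M] :
    ∃ n, Nonempty (FreeRetract A (Fin n) M) := by
  obtain ⟨n, π, hπ⟩ := Module.Finite.exists_fin' A M
  obtain ⟨σ, hσ⟩ := Module.projective_lifting_property π LinearMap.id hπ
  exact ⟨n, ⟨⟨π, σ, hσ⟩⟩⟩

variable [Fintype ι] [DecidableEq ι] [Fintype ι₁] [DecidableEq ι₁] [Fintype ι₂] [DecidableEq ι₂]

noncomputable def matrix (r : FreeRetract A ι M) : Matrix ι ι A :=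
  LinearMap.toMatrix' (r.σ ∘ₗ r.π)

lemma σ_π (r : FreeRetract A ι M) (v : ι → A) : r.σ (r.π v) = r.matrix *ᵥ v := by
  rw [matrix, ← Matrix.mulVecLin_apply, ← Matrix.toLin'_apply', Matrix.toLin'_toMatrix']
  rfl

lemma matrix_mul_self (r : FreeRetract A ι M) : r.matrix * r.matrix = r.matrix := by
  rw [matrix, ← LinearMap.toMatrix'_comp]
  congr 1
  exact LinearMap.ext fun v => by simp

def mapOfMatrix (r₁ : FreeRetract A ι₁ M₁) (r₂ : FreeRetract A ι₂ M₂) (U : Matrix ι₂ ι₁ A) :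
    M₁ →ₗ[A] M₂ :=
  r₂.π ∘ₗ U.mulVecLin ∘ₗ r₁.σ

lemma mapOfMatrix_comp_mapOfMatrix (r₁ : FreeRetract A ι₁ M₁) (r₂ : FreeRetract A ι₂ M₂)
    {U : Matrix ι₂ ι₁ A} {V : Matrix ι₁ ι₂ A} (hVU : V * U = r₁.matrix)
    (hUV : U * V = r₂.matrix) :
    r₂.mapOfMatrix r₁ V ∘ₗ r₁.mapOfMatrix r₂ U = LinearMap.id := by
  have hVEU : V * (r₂.matrix * U) = r₁.matrix := by
    rw [← hUV, Matrix.mul_assoc, ← Matrix.mul_assoc V, hVU, matrix_mul_self]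
  refine LinearMap.ext fun m => ?_
  simp only [mapOfMatrix, LinearMap.comp_apply, Matrix.mulVecLin_apply, σ_π,
    Matrix.mulVec_mulVec, hVEU, LinearMap.id_apply]
  rw [← σ_π, π_σ, π_σ]

lemma nonempty_linearEquiv_iff (r₁ : FreeRetract A ι₁ M₁) (r₂ : FreeRetract A ι₂ M₂) :
    Nonempty (M₁ ≃ₗ[A] M₂) ↔
      ∃ (U : Matrix ι₂ ι₁ A) (V : Matrix ι₁ ι₂ A), V * U = r₁.matrix ∧ U * V = r₂.matrix := by
  constructor
  · rintro ⟨g⟩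
    refine ⟨LinearMap.toMatrix' (r₂.σ ∘ₗ g.toLinearMap ∘ₗ r₁.π),
      LinearMap.toMatrix' (r₁.σ ∘ₗ g.symm.toLinearMap ∘ₗ r₂.π), ?_, ?_⟩ <;>
    · rw [matrix, ← LinearMap.toMatrix'_comp]
      congr 1
      exact LinearMap.ext fun v => by simp
  · rintro ⟨U, V, hVU, hUV⟩
    exact ⟨.ofLinearMap (r₁.mapOfMatrix r₂ U) (r₂.mapOfMatrix r₁ V)
      (mapOfMatrix_comp_mapOfMatrix r₂ r₁ hUV hVU) (mapOfMatrix_comp_mapOfMatrix r₁ r₂ hVU hUV)⟩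

lemma matrix_apply (r : FreeRetract A ι M) (i j : ι) :
    r.matrix i j = r.σ (r.π (Pi.single j 1)) i :=
  LinearMap.toMatrix'_apply _ i j

noncomputable def baseChange (B : Type*) [CommSemiring B] [Algebra A B]
    (r : FreeRetract A ι M) : FreeRetract B ι (B ⊗[A] M) where
  π := r.π.baseChange B ∘ₗ (TensorProduct.piScalarRight A B B ι).symm.toLinearMap
  σ := (TensorProduct.piScalarRight A B B ι).toLinearMap ∘ₗ r.σ.baseChange B
  π_comp_σ := LinearMap.ext fun t => by
    simp only [LinearMap.comp_apply, LinearEquiv.coe_coe, LinearEquiv.symm_apply_apply,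
      ← LinearMap.comp_apply (r.π.baseChange B), ← LinearMap.baseChange_comp, r.π_comp_σ,
      LinearMap.baseChange_id, LinearMap.id_apply]

lemma matrix_baseChange (B : Type*) [CommSemiring B] [Algebra A B] (r : FreeRetract A ι M) :
    (r.baseChange B).matrix = r.matrix.map (algebraMap A B) := by
  ext i j
  simp [matrix_apply, baseChange, TensorProduct.piScalarRight_symm_single,
    Algebra.algebraMap_eq_smul_one]

noncomputable def ofIdempotent (E : Matrix ι ι A) (hE : E * E = E) :
    FreeRetract A ι (LinearMap.range E.mulVecLin) where
  π := E.mulVecLin.rangeRestrict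
  σ := (LinearMap.range E.mulVecLin).subtype
  π_comp_σ := by
    refine LinearMap.ext fun ⟨_, v, rfl⟩ => Subtype.ext ?_
    simp [Matrix.mulVec_mulVec, hE]

lemma matrix_ofIdempotent (E : Matrix ι ι A) (hE : E * E = E) :
    (ofIdempotent E hE).matrix = E := by
  rw [matrix, ofIdempotent, LinearMap.subtype_comp_codRestrict, ← Matrix.toLin'_apply',
    LinearMap.toMatrix'_toLin']

end FreeRetract

theorem isInvertibleModule_iff_invertible (R M : Type) [CommRing R] [AddCommGroup M]
    [Module R M] : IsInvertibleModule R M ↔ Module.Invertible R M := by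
  refine ⟨fun ⟨_, _, _, _, _, ⟨e⟩⟩ => .left e, fun _ => ⟨inferInstance, inferInstance, ?_⟩⟩
  exact ⟨_, _, _, ⟨TensorProduct.comm R M _ ≪≫ₗ Module.Invertible.linearEquiv R M⟩⟩

universe u v

namespace Ring.DirectLimit

variable {ι : Type u} [Preorder ι] {G : ι → Type v} [∀ i, CommRing (G i)]
  {f : ∀ i j, i ≤ j → G i →+* G j} {κ κ₁ κ₂ : Type*}

local notation "R∞" => Ring.DirectLimit G fun i j h => f i j h
local notation "of∞" => Ring.DirectLimit.of G fun i j h => f i j h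

lemma matrix_map_f_map_of {i j : ι} (hij : i ≤ j) (A : Matrix κ₁ κ₂ (G i)) :
    (A.map (f i j hij)).map (of∞ j) = A.map (of∞ i) := by
  ext; exact of_f hij _

lemma matrix_map_f_map_f [DirectedSystem G fun i j h => f i j h] {i j k : ι} (hij : i ≤ j)
    (hjk : j ≤ k) (A : Matrix κ₁ κ₂ (G i)) :
    (A.map (f i j hij)).map (f j k hjk) = A.map (f i k (hij.trans hjk)) := by
  ext; exact DirectedSystem.map_map (f := fun i j h => f i j h) hij hjk _

variable [IsDirectedOrder ι]

lemma eventually_exists_of_eq [Nonempty ι] (z : R∞) : ∀ᶠ j in atTop, ∃ x, of∞ j x = z := by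
  obtain ⟨i, x, rfl⟩ := exists_of z
  exact eventually_atTop.2 ⟨i, fun j hij => ⟨f i j hij x, of_f hij x⟩⟩

lemma matrix_eventually_exists_map_eq [Nonempty ι] [Finite κ₁] [Finite κ₂]
    (A : Matrix κ₁ κ₂ R∞) :
    ∀ᶠ j in atTop, ∃ A₀ : Matrix κ₁ κ₂ (G j), A₀.map (of∞ j) = A := by
  filter_upwards [eventually_all.2 fun a => eventually_all.2 fun b =>
    eventually_exists_of_eq (A a b)] with j hj
  choose A₀ hA₀ using hj
  exact ⟨.of A₀, Matrix.ext hA₀⟩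

variable [DirectedSystem G fun i j h => f i j h]

lemma eventually_eq_of_of_eq {i : ι} {x y : G i} (h : of∞ i x = of∞ i y) :
    ∀ᶠ j in atTop, ∀ hij : i ≤ j, f i j hij x = f i j hij y := by
  have : Nonempty ι := ⟨i⟩
  obtain ⟨j, hij, hxy⟩ := of.zero_exact (by rw [map_sub, h, sub_self] : of∞ i (x - y) = 0)
  refine eventually_atTop.2 ⟨j, fun k hjk hik => ?_⟩
  rw [← sub_eq_zero, ← map_sub, ← DirectedSystem.map_map (f := fun i j h => f i j h) hij hjk,
    hxy, map_zero]

lemma matrix_eventually_map_eq [Finite κ₁] [Finite κ₂] {i : ι} {A B : Matrix κ₁ κ₂ (G i)}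
    (h : A.map (of∞ i) = B.map (of∞ i)) :
    ∀ᶠ j in atTop, ∀ hij : i ≤ j, A.map (f i j hij) = B.map (f i j hij) := by
  filter_upwards [eventually_all.2 fun a => eventually_all.2 fun b =>
    eventually_eq_of_of_eq (congr_fun₂ h a b)] with j hj hij
  exact Matrix.ext fun a b => hj a b hij

lemma eventually_exists_idempotent_map_eq [Nonempty ι] [Fintype κ] {E : Matrix κ κ R∞}
    (hE : E * E = E) :
    ∀ᶠ j in atTop, ∃ E₀ : Matrix κ κ (G j), E₀ * E₀ = E₀ ∧ E₀.map (of∞ j) = E := by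
  obtain ⟨i, E₀, rfl⟩ := (matrix_eventually_exists_map_eq E).exists
  rw [← Matrix.map_mul] at hE
  filter_upwards [matrix_eventually_map_eq hE, eventually_ge_atTop i] with j hj hij
  exact ⟨E₀.map (f i j hij), by rw [← Matrix.map_mul, hj hij], matrix_map_f_map_of hij E₀⟩

lemma exists_mul_eq_map_of_mul_eq_map [Fintype κ₁] [Fintype κ₂] {i : ι}
    {E₁ : Matrix κ₁ κ₁ (G i)} {E₂ : Matrix κ₂ κ₂ (G i)} {U : Matrix κ₂ κ₁ R∞}
    {V : Matrix κ₁ κ₂ R∞} (hVU : V * U = E₁.map (of∞ i)) (hUV : U * V = E₂.map (of∞ i)) :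
    ∃ j, ∃ hij : i ≤ j, ∃ (U₀ : Matrix κ₂ κ₁ (G j)) (V₀ : Matrix κ₁ κ₂ (G j)),
      V₀ * U₀ = E₁.map (f i j hij) ∧ U₀ * V₀ = E₂.map (f i j hij) := by
  have : Nonempty ι := ⟨i⟩
  obtain ⟨k, ⟨U₀, rfl⟩, ⟨V₀, rfl⟩, hik⟩ := ((matrix_eventually_exists_map_eq U).and
    ((matrix_eventually_exists_map_eq V).and (eventually_ge_atTop i))).exists
  rw [← Matrix.map_mul, ← matrix_map_f_map_of hik] at hVU hUV
  obtain ⟨l, hVU', hUV', hkl⟩ := ((matrix_eventually_map_eq hVU).and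
    ((matrix_eventually_map_eq hUV).and (eventually_ge_atTop k))).exists
  refine ⟨l, hik.trans hkl, U₀.map (f k l hkl), V₀.map (f k l hkl), ?_, ?_⟩
  · rw [← Matrix.map_mul, hVU' hkl, matrix_map_f_map_f]
  · rw [← Matrix.map_mul, hUV' hkl, matrix_map_f_map_f]

theorem exists_linearEquiv_baseChange_of_linearEquiv_baseChange {i : ι} (N₁ N₂ : Type*)
    [AddCommGroup N₁] [Module (G i) N₁] [Module.Finite (G i) N₁] [Module.Projective (G i) N₁]
    [AddCommGroup N₂] [Module (G i) N₂] [Module.Finite (G i) N₂] [Module.Projective (G i) N₂]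
    (h : letI := (of∞ i).toAlgebra; Nonempty (R∞ ⊗[G i] N₁ ≃ₗ[R∞] R∞ ⊗[G i] N₂)) :
    ∃ j, ∃ hij : i ≤ j, letI := (f i j hij).toAlgebra
      Nonempty (G j ⊗[G i] N₁ ≃ₗ[G j] G j ⊗[G i] N₂) := by
  obtain ⟨n₁, ⟨r₁⟩⟩ := FreeRetract.exists_of_finite_projective (G i) N₁
  obtain ⟨n₂, ⟨r₂⟩⟩ := FreeRetract.exists_of_finite_projective (G i) N₂
  let := (of∞ i).toAlgebra
  obtain ⟨U, V, hVU, hUV⟩ := ((r₁.baseChange R∞).nonempty_linearEquiv_iff (r₂.baseChange R∞)).1 h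
  rw [FreeRetract.matrix_baseChange] at hVU hUV
  obtain ⟨j, hij, U₀, V₀, hVU₀, hUV₀⟩ := exists_mul_eq_map_of_mul_eq_map hVU hUV
  let := (f i j hij).toAlgebra
  refine ⟨j, hij, ((r₁.baseChange (G j)).nonempty_linearEquiv_iff (r₂.baseChange (G j))).2
    ⟨U₀, V₀, ?_, ?_⟩⟩ <;> rwa [FreeRetract.matrix_baseChange]

theorem eventually_exists_linearEquiv_baseChange [Nonempty ι] (M : Type*) [AddCommGroup M]
    [Module R∞ M] [Module.Finite R∞ M] [Module.Projective R∞ M] :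
    ∀ᶠ i in atTop, ∃ (N : Type v) (_ : AddCommGroup N) (_ : Module (G i) N),
      Module.Finite (G i) N ∧ Module.Projective (G i) N ∧
        letI := (of∞ i).toAlgebra
        Nonempty (R∞ ⊗[G i] N ≃ₗ[R∞] M) := by
  obtain ⟨n, ⟨r⟩⟩ := FreeRetract.exists_of_finite_projective R∞ M
  filter_upwards [eventually_exists_idempotent_map_eq r.matrix_mul_self] with i ⟨E, hE, hEr⟩
  let r₀ := FreeRetract.ofIdempotent E hE
  let := (of∞ i).toAlgebra
  refine ⟨_, _, _, r₀.finite, r₀.projective,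
    ((r₀.baseChange R∞).nonempty_linearEquiv_iff r).2 ⟨r.matrix, r.matrix, ?_, r.matrix_mul_self⟩⟩
  rw [FreeRetract.matrix_baseChange, FreeRetract.matrix_ofIdempotent, r.matrix_mul_self]
  exact hEr.symm

open TensorProduct in
theorem exists_invertible_baseChange_linearEquiv [Nonempty ι] (M : Type*) [AddCommGroup M]
    [Module R∞ M] [Module.Invertible R∞ M] :
    ∃ (i : ι) (N : Type v) (_ : AddCommGroup N) (_ : Module (G i) N), Module.Invertible (G i) N ∧
      letI := (of∞ i).toAlgebra
      Nonempty (R∞ ⊗[G i] N ≃ₗ[R∞] M) := by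
  obtain ⟨k, ⟨N₁, _, _, _, _, ⟨e₁⟩⟩, ⟨N₂, _, _, _, _, ⟨e₂⟩⟩⟩ :=
    ((eventually_exists_linearEquiv_baseChange (f := f) M).and
      (eventually_exists_linearEquiv_baseChange (f := f) (Module.Dual R∞ M))).exists
  let := (of∞ k).toAlgebra
  obtain ⟨l, hkl, ⟨e⟩⟩ := exists_linearEquiv_baseChange_of_linearEquiv_baseChange
    (N₁ ⊗[G k] N₂) (G k) ⟨AlgebraTensorModule.distribBaseChange _ _ _ _ ≪≫ₗ
      TensorProduct.congr e₁ e₂ ≪≫ₗ TensorProduct.comm _ _ _ ≪≫ₗ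
      Module.Invertible.linearEquiv _ _ ≪≫ₗ (AlgebraTensorModule.rid _ _ _).symm⟩
  let := (f k l hkl).toAlgebra
  let := (of∞ l).toAlgebra
  have : IsScalarTower (G k) (G l) R∞ :=
    .of_algebraMap_eq' (RingHom.ext fun x => (of_f hkl x).symm)
  exact ⟨l, G l ⊗[G k] N₁, _, _,
    .left ((AlgebraTensorModule.distribBaseChange _ _ _ _).symm ≪≫ₗ e ≪≫ₗ
      AlgebraTensorModule.rid _ _ _),
    ⟨AlgebraTensorModule.cancelBaseChange _ _ _ _ _ ≪≫ₗ e₁⟩⟩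

end Ring.DirectLimit

/-- The Picard group functor commutes with filtering direct limits of
commutative rings: for a directed system of commutative rings G i with colimit
R = Ring.DirectLimit G f, the canonical map colim Pic(G i) → Pic(R) is surjective
(every invertible R-module descends to some G i) and injective (two invertible modules
over G i that become isomorphic over R are already isomorphic over some G j, j ≥ i). -/
theorem pic_commutes_with_filtered_colimits
    (ι : Type) [Preorder ι] [IsDirected ι (· ≤ ·)] [Nonempty ι]
    (G : ι → Type) [∀ i, CommRing (G i)] (f : ∀ i j, i ≤ j → G i →+* G j)
    [DirectedSystem G (fun i j h => f i j h)] :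
    (∀ (M : Type) (_ : AddCommGroup M)
        (_ : Module (Ring.DirectLimit G fun i j h => f i j h) M),
      IsInvertibleModule (Ring.DirectLimit G fun i j h => f i j h) M →
      ∃ (i : ι) (N : Type) (_ : AddCommGroup N) (_ : Module (G i) N),
        IsInvertibleModule (G i) N ∧
        (letI := (Ring.DirectLimit.of G (fun i j h => f i j h) i).toAlgebra
         Nonempty (((Ring.DirectLimit G fun i j h => f i j h) ⊗[G i] N)
           ≃ₗ[Ring.DirectLimit G fun i j h => f i j h] M))) ∧
    (∀ (i : ι) (N₁ N₂ : Type) (_ : AddCommGroup N₁) (_ : Module (G i) N₁)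
        (_ : AddCommGroup N₂) (_ : Module (G i) N₂),
      IsInvertibleModule (G i) N₁ → IsInvertibleModule (G i) N₂ →
      (letI := (Ring.DirectLimit.of G (fun i j h => f i j h) i).toAlgebra
       Nonempty (((Ring.DirectLimit G fun i j h => f i j h) ⊗[G i] N₁)
         ≃ₗ[Ring.DirectLimit G fun i j h => f i j h]
           ((Ring.DirectLimit G fun i j h => f i j h) ⊗[G i] N₂))) →
      ∃ (j : ι) (hij : i ≤ j),
        letI := (f i j hij).toAlgebra
        Nonempty ((G j ⊗[G i] N₁) ≃ₗ[G j] (G j ⊗[G i] N₂))) := by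
  refine ⟨fun M _ _ hM => ?_, fun i N₁ N₂ _ _ _ _ h₁ h₂ e => ?_⟩
  · have := (isInvertibleModule_iff_invertible _ M).1 hM
    obtain ⟨i, N, _, _, hN, e⟩ :=
      Ring.DirectLimit.exists_invertible_baseChange_linearEquiv (f := f) M
    exact ⟨i, N, _, _, (isInvertibleModule_iff_invertible _ N).2 hN, e⟩
  · obtain ⟨_, _, -⟩ := h₁
    obtain ⟨_, _, -⟩ := h₂
    exact Ring.DirectLimit.exists_linearEquiv_baseChange_of_linearEquiv_baseChange N₁ N₂ e
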